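/- Let n ≥ 2 be an integer and z = √n·e^{iφ} with φ ∈ (0, π) (so z ∉ ℝ and |z|² = n). Let x₀ = (n−1)/(2(z−1)) and define the width function h(α) = ((n−1)/2)·∑_{j=1}^∞ n^{−j/2}·|cos(α + jφ)| for α ∈ ℝ. Then the convex hull of F_z is characterized by the bounding halfplanes: convexHull(F_z) = { x ∈ ℂ : ∀ α ∈ ℝ, Re( e^{−iα}·(x − x₀) ) ≤ h(α) }. -/

import Mathlib

/-!
Writing `y ∈ F_z` as `x₀ + ∑ (aᵢ - (n-1)/2) z^{-(i+1)}`, the projection of `y - x₀` on the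
direction `e^{iα}` is `∑ (aᵢ - (n-1)/2) Re(e^{-iα} z^{-(i+1)})`. Since `|aᵢ - (n-1)/2| ≤ (n-1)/2`
this is at most `h(α)`, with equality for the greedy digits `aᵢ ∈ {0, n-1}` chosen by the sign of
`cos(α + (i+1)φ)`. Hence `h` is the support function of the compact set `F_z`, and a compact
convex set in the plane is the intersection of its supporting halfplanes.
-/

open Set Module Complex

/-- The fractional-part set `F_z` for base `z` and digits `{0,…,n-1}`. -/
def Fset (n : ℕ) (z : ℂ) : Set ℂ :=
  { x | ∃ a : ℕ → ℕ, (∀ i, a i < n) ∧ x = ∑' i : ℕ, (a i : ℂ) * z⁻¹ ^ (i + 1) }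

section CompactHull

variable {E : Type*} [AddCommGroup E] [Module ℝ E] [FiniteDimensional ℝ E]

theorem convexHull_eq_image_stdSimplex_prod (s : Set E) :
    convexHull ℝ s = (fun q : (Fin (finrank ℝ E + 1) → ℝ) × (Fin (finrank ℝ E + 1) → E) =>
      ∑ i, q.1 i • q.2 i) '' (stdSimplex ℝ _ ×ˢ univ.pi fun _ => s) := by
  refine Subset.antisymm (fun x hx => ?_) ?_
  · obtain ⟨ι, _, p, w, hps, hind, hw0, hw1, rfl⟩ := eq_pos_convex_span_of_mem_convexHull hx
    obtain ⟨i₀⟩ : Nonempty ι := by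
      by_contra! hι
      simp at hw1
    have hcard : Fintype.card ι ≤ Fintype.card (Fin (finrank ℝ E + 1)) := by
      simpa using hind.card_le_finrank_succ.trans (Nat.succ_le_succ (Submodule.finrank_le _))
    -- pad the Carathéodory representation with points `p i₀` of weight zero
    obtain ⟨e⟩ := Function.Embedding.nonempty_of_card_le hcard
    set w' := Function.extend e w 0
    set p' := Function.extend e p fun _ => p i₀
    have hw' : ∀ j ∉ range e, w' j = 0 := fun j hj =>
      Function.extend_apply' _ _ _ fun ⟨i, hi⟩ => hj ⟨i, hi⟩
    refine ⟨(w', p'), ⟨⟨fun j => ?_, ?_⟩, fun j _ => ?_⟩, ?_⟩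
    · by_cases hj : j ∈ range e
      · obtain ⟨i, rfl⟩ := hj
        simpa [w', e.injective.extend_apply] using (hw0 i).le
      · exact (hw' j hj).ge
    · rw [← hw1]
      exact (Fintype.sum_of_injective e e.injective w w' hw'
        fun i => (e.injective.extend_apply w 0 i).symm).symm
    · by_cases hj : j ∈ range e
      · obtain ⟨i, rfl⟩ := hj
        simpa [p', e.injective.extend_apply] using hps ⟨i, rfl⟩
      · simpa [p', Function.extend_apply' _ _ _ fun ⟨i, hi⟩ => hj ⟨i, hi⟩] using hps ⟨i₀, rfl⟩
    · refine (Fintype.sum_of_injective e e.injective _ _ (fun j hj => by simp [hw' j hj])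
        fun i => ?_).symm
      simp only [w', p', e.injective.extend_apply]
  · rintro - ⟨⟨w, p⟩, ⟨⟨hw0, hw1⟩, hp⟩, rfl⟩
    exact (convex_convexHull ℝ s).sum_mem (fun i _ => hw0 i) hw1
      fun i _ => subset_convexHull ℝ s (hp i (mem_univ i))

theorem IsCompact.convexHull [TopologicalSpace E] [IsTopologicalAddGroup E] [ContinuousSMul ℝ E]
    {s : Set E} (hs : IsCompact s) : IsCompact (convexHull ℝ s) := by
  rw [convexHull_eq_image_stdSimplex_prod]
  exact ((isCompact_stdSimplex ℝ _).prod (isCompact_univ_pi fun _ => hs)).image <|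
    continuous_finsetSum _ fun i _ =>
      ((continuous_apply i).comp continuous_fst).smul ((continuous_apply i).comp continuous_snd)

end CompactHull

theorem convex_setOf_forall_re_mul_sub_le (u : ℝ → ℂ) (x₀ : ℂ) (h : ℝ → ℝ) :
    Convex ℝ {x : ℂ | ∀ α, (u α * (x - x₀)).re ≤ h α} := by
  intro x hx y hy a b ha hb hab α
  have key : u α * (a • x + b • y - x₀) = a * (u α * (x - x₀)) + b * (u α * (y - x₀)) := by
    have hab' : (a : ℂ) + b = 1 := by exact_mod_cast hab
    simp only [real_smul]
    linear_combination (u α * x₀) * hab'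
  have := add_le_add (mul_le_mul_of_nonneg_left (hx α) ha) (mul_le_mul_of_nonneg_left (hy α) hb)
  rw [key, add_re, re_ofReal_mul, re_ofReal_mul]
  linarith [show a * h α + b * h α = h α by rw [← add_mul, hab, one_mul]]

theorem convexHull_eq_setOf_forall_re_le {S : Set ℂ} (hS : IsClosed (convexHull ℝ S))
    (x₀ : ℂ) (h : ℝ → ℝ)
    (hmax : ∀ α : ℝ, IsGreatest ((fun y => (exp (-I * α) * (y - x₀)).re) '' S) (h α)) :
    convexHull ℝ S = {x : ℂ | ∀ α : ℝ, (exp (-I * α) * (x - x₀)).re ≤ h α} := by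
  refine Subset.antisymm (convexHull_min (fun y hy α => (hmax α).2 ⟨y, hy, rfl⟩)
    (convex_setOf_forall_re_mul_sub_le _ x₀ h)) fun x hx => ?_
  rw [← RCLike.iInter_halfSpaces_eq (𝕜 := ℂ) (convex_convexHull ℝ S) hS]
  refine mem_iInter.2 fun l => ?_
  set c := l 1
  -- every `ℂ`-linear functional is `x ↦ c * x`, and `c = ‖c‖ * exp (-I * α)` with `α = -arg c`
  have hl : ∀ y, l y = ‖c‖ * (exp (-I * ((-arg c : ℝ) : ℂ)) * y) := fun y => by
    rw [show l y = c * y by simpa [mul_comm] using l.map_smul y 1]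
    conv_lhs => rw [← norm_mul_exp_arg_mul_I c]
    push_cast; ring_nf
  obtain ⟨⟨y, hyS, hy⟩, -⟩ := hmax (-arg c)
  refine ⟨y, subset_convexHull ℝ S hyS, ?_⟩
  have := hx (-arg c)
  dsimp only at hy
  rw [← hy, mul_sub, mul_sub, sub_re, sub_re] at this
  simp only [RCLike.re_to_complex, hl, re_ofReal_mul]
  exact mul_le_mul_of_nonneg_left (by linarith) (norm_nonneg c)

section DigitExpansion

variable {z : ℂ}

theorem norm_inv_lt_one_of_one_lt (hz : 1 < ‖z‖) : ‖z⁻¹‖ < 1 := by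
  rw [norm_inv]; exact inv_lt_one_of_one_lt₀ hz

theorem summable_norm_inv_pow_succ (hz : 1 < ‖z‖) : Summable fun i : ℕ => ‖z⁻¹‖ ^ (i + 1) :=
  (summable_nat_add_iff 1).2 <|
    summable_geometric_of_lt_one (norm_nonneg _) (norm_inv_lt_one_of_one_lt hz)

theorem summable_mul_inv_pow_succ (hz : 1 < ‖z‖) {c : ℕ → ℂ} {C : ℝ} (hc : ∀ i, ‖c i‖ ≤ C) :
    Summable fun i : ℕ => c i * z⁻¹ ^ (i + 1) :=
  .of_norm_bounded ((summable_norm_inv_pow_succ hz).mul_left C) fun i => by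
    rw [norm_mul, norm_pow]
    exact mul_le_mul_of_nonneg_right (hc i) (by positivity)

theorem tsum_inv_pow_succ (hz : 1 < ‖z‖) : ∑' i : ℕ, z⁻¹ ^ (i + 1) = (z - 1)⁻¹ := by
  have hz0 : z ≠ 0 := norm_pos_iff.1 (one_pos.trans hz)
  have hz1 : z - 1 ≠ 0 := sub_ne_zero.2 fun h => by simp [h] at hz
  simp_rw [pow_succ', tsum_mul_left, tsum_geometric_of_norm_lt_one (norm_inv_lt_one_of_one_lt hz)]
  field_simp

theorem isCompact_Fset (hz : 1 < ‖z‖) (n : ℕ) : IsCompact (Fset n z) := by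
  have hrange : Fset n z = range fun a : ℕ → Fin n => ∑' i, ((a i : ℕ) : ℂ) * z⁻¹ ^ (i + 1) := by
    ext x
    constructor
    · rintro ⟨a, ha, rfl⟩
      exact ⟨fun i => ⟨a i, ha i⟩, rfl⟩
    · rintro ⟨a, rfl⟩
      exact ⟨fun i => a i, fun i => (a i).is_lt, rfl⟩
  rw [hrange]
  refine isCompact_range <| continuous_tsum
    (fun i => (continuous_of_discreteTopology
      (f := fun k : Fin n => ((k : ℕ) : ℂ) * z⁻¹ ^ (i + 1))).comp (continuous_apply i))
    ((summable_norm_inv_pow_succ hz).mul_left (n : ℝ)) fun i a => ?_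
  rw [norm_mul, norm_pow, norm_natCast]
  exact mul_le_mul_of_nonneg_right (by exact_mod_cast (a i).is_lt.le) (by positivity)

theorem re_mul_tsum_sub_center (hz : 1 < ‖z‖) {n : ℕ} {a : ℕ → ℕ} (ha : ∀ i, a i < n)
    (w : ℂ) :
    (w * (∑' i, (a i : ℂ) * z⁻¹ ^ (i + 1) - ((n : ℂ) - 1) / (2 * (z - 1)))).re =
      ∑' i, ((a i : ℝ) - ((n : ℝ) - 1) / 2) * (w * z⁻¹ ^ (i + 1)).re := by
  have hdigits := summable_mul_inv_pow_succ hz (c := fun i => (a i : ℂ)) (C := n)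
    fun i => by simpa using (ha i).le
  have hcenter := summable_mul_inv_pow_succ hz (c := fun _ => ((n : ℂ) - 1) / 2) fun _ => le_rfl
  have hcentered : ∑' i, (a i : ℂ) * z⁻¹ ^ (i + 1) - ((n : ℂ) - 1) / (2 * (z - 1)) =
      ∑' i, (((a i : ℝ) - ((n : ℝ) - 1) / 2 : ℝ) : ℂ) * z⁻¹ ^ (i + 1) := by
    rw [show ((n : ℂ) - 1) / (2 * (z - 1)) = ∑' i, ((n : ℂ) - 1) / 2 * z⁻¹ ^ (i + 1) by
      rw [tsum_mul_left, tsum_inv_pow_succ hz]; field_simp, ← hdigits.tsum_sub hcenter]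
    push_cast
    simp_rw [sub_mul]
  rw [hcentered, ← tsum_mul_left, re_tsum ((hdigits.sub hcenter).mul_left w |>.congr fun i => ?_)]
  · simp_rw [mul_left_comm w, re_ofReal_mul]
  · push_cast; ring

theorem isGreatest_re_mul_sub_center (hz : 1 < ‖z‖) {n : ℕ} (hn : 1 ≤ n) (w : ℂ) :
    IsGreatest ((fun y => (w * (y - ((n : ℂ) - 1) / (2 * (z - 1)))).re) '' Fset n z)
      (((n : ℝ) - 1) / 2 * ∑' i, |(w * z⁻¹ ^ (i + 1)).re|) := by
  set m := ((n : ℝ) - 1) / 2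
  set r := fun i : ℕ => (w * z⁻¹ ^ (i + 1)).re
  have hr : Summable fun i => |r i| :=
    .of_nonneg_of_le (fun _ => abs_nonneg _)
      (fun i => (abs_re_le_norm _).trans (by rw [norm_mul, norm_pow]))
      ((summable_norm_inv_pow_succ hz).mul_left ‖w‖)
  rw [← tsum_mul_left]
  constructor
  · let a : ℕ → ℕ := fun i => if 0 ≤ r i then n - 1 else 0
    have ha : ∀ i, a i < n := fun i => by simp only [a]; split <;> omega
    refine ⟨_, ⟨a, ha, rfl⟩, ?_⟩
    dsimp only
    rw [re_mul_tsum_sub_center hz ha w]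
    refine tsum_congr fun i => ?_
    change ((a i : ℝ) - m) * r i = m * |r i|
    by_cases hri : 0 ≤ r i
    · rw [abs_of_nonneg hri]
      simp only [a, if_pos hri, Nat.cast_sub hn, m]
      push_cast; ring
    · rw [abs_of_neg (not_le.1 hri)]
      simp only [a, if_neg hri, m]
      push_cast; ring
  · rintro _ ⟨_, ⟨a, ha, rfl⟩, rfl⟩
    have hterm : ∀ i, |((a i : ℝ) - m) * r i| ≤ m * |r i| := fun i => by
      rw [abs_mul]
      refine mul_le_mul_of_nonneg_right (abs_le.2 ⟨?_, ?_⟩) (abs_nonneg _)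
      · linarith [(Nat.cast_nonneg (a i) : (0 : ℝ) ≤ a i)]
      · linarith [(show (a i : ℝ) + 1 ≤ n by exact_mod_cast ha i), show 2 * m = n - 1 by ring]
    dsimp only
    rw [re_mul_tsum_sub_center hz ha w]
    exact (Summable.of_norm_bounded (hr.mul_left m) hterm).tsum_le_tsum
      (fun i => (le_abs_self _).trans (hterm i)) (hr.mul_left m)

end DigitExpansion

theorem re_exp_mul_inv_pow (ρ φ α : ℝ) (j : ℕ) :
    (exp (-I * α) * ((ρ : ℂ) * exp (I * φ))⁻¹ ^ j).re = ρ⁻¹ ^ j * Real.cos (α + j * φ) := by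
  have : exp (-I * α) * ((ρ : ℂ) * exp (I * φ))⁻¹ ^ j =
      ((ρ⁻¹ ^ j : ℝ) : ℂ) * exp ((-(α + j * φ) : ℝ) * I) := by
    rw [mul_inv, mul_pow, ← exp_neg, ← exp_nat_mul, mul_left_comm, ← exp_add]
    push_cast
    ring_nf
  rw [this, re_ofReal_mul, exp_ofReal_mul_I_re, Real.cos_neg]

theorem Real.rpow_neg_natCast_div_two {x : ℝ} (hx : 0 ≤ x) (k : ℕ) :
    x ^ (-((k : ℝ) / 2)) = (√x)⁻¹ ^ k := by
  rw [Real.sqrt_eq_rpow, ← Real.rpow_natCast, Real.inv_rpow (Real.rpow_nonneg hx _),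
    ← Real.rpow_mul hx, Real.rpow_neg hx]
  ring_nf

theorem stmt_19_general (n : ℕ) (hn : 2 ≤ n) (φ : ℝ)
    (z : ℂ) (hz : z = (Real.sqrt n : ℂ) * Complex.exp (Complex.I * (φ : ℂ)))
    (x₀ : ℂ) (hx₀ : x₀ = ((n : ℂ) - 1) / (2 * (z - 1)))
    (h : ℝ → ℝ)
    (hh : ∀ α : ℝ, h α = ((n : ℝ) - 1) / 2 *
      ∑' j : ℕ, ((n : ℝ) ^ (-(((j : ℝ) + 1) / 2))) * |Real.cos (α + ((j : ℝ) + 1) * φ)|) :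
    convexHull ℝ (Fset n z) =
      { x : ℂ | ∀ α : ℝ, (Complex.exp (-Complex.I * (α : ℂ)) * (x - x₀)).re ≤ h α } := by
  have hz1 : 1 < ‖z‖ := by
    rw [hz, norm_mul, norm_exp_I_mul_ofReal, mul_one, norm_real,
      Real.norm_of_nonneg (Real.sqrt_nonneg _), Real.lt_sqrt zero_le_one, one_pow]
    exact_mod_cast hn
  have hsupport : ∀ α : ℝ,
      h α = ((n : ℝ) - 1) / 2 * ∑' j : ℕ, |(exp (-I * α) * z⁻¹ ^ (j + 1)).re| := fun α => by
    rw [hh α, hz]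
    congr 1
    refine tsum_congr fun j => ?_
    rw [re_exp_mul_inv_pow, abs_mul, ← Real.rpow_neg_natCast_div_two (Nat.cast_nonneg n),
      abs_of_nonneg (Real.rpow_nonneg (Nat.cast_nonneg n) _)]
    push_cast
    rfl
  subst hx₀
  exact convexHull_eq_setOf_forall_re_le (isCompact_Fset hz1 n).convexHull.isClosed _ h
    fun α => hsupport α ▸ isGreatest_re_mul_sub_center hz1 (by omega) _

theorem stmt_19 (n : ℕ) (hn : 2 ≤ n) (φ : ℝ) (hφ : φ ∈ Set.Ioo 0 Real.pi)
    (z : ℂ) (hz : z = (Real.sqrt n : ℂ) * Complex.exp (Complex.I * (φ : ℂ)))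
    (x₀ : ℂ) (hx₀ : x₀ = ((n : ℂ) - 1) / (2 * (z - 1)))
    (h : ℝ → ℝ)
    (hh : ∀ α : ℝ, h α = ((n : ℝ) - 1) / 2 *
      ∑' j : ℕ, ((n : ℝ) ^ (-(((j : ℝ) + 1) / 2))) * |Real.cos (α + ((j : ℝ) + 1) * φ)|) :
    convexHull ℝ (Fset n z) =
      { x : ℂ | ∀ α : ℝ, (Complex.exp (-Complex.I * (α : ℂ)) * (x - x₀)).re ≤ h α } :=
  stmt_19_general n hn φ z hz x₀ hx₀ h hh
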